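/- Let X ≥ 0 be regularly varying with index −α (α > 0) and Y > 0 independent of X with E[Y^p] < ∞ for all p > 0, and suppose P(X > t) = t^{−α} for t ≥ 1 (exact Pareto case). Then the product XY satisfies lim_{t→∞} P(XY > t)/P(X > t) = E[Y^α]; in particular XY is regularly varying with index −α. -/

import Mathlib

/-!
Conditioning on `Y`, one expects `P(XY > t) = E[Ḡ(t / Y)]` with `Ḡ s = min 1 (s ^ (-α))` the tail
of `X`; then `t ^ α * P(XY > t) = E[min (t ^ α) (Y ^ α)] → E[Y ^ α]` by dominated convergence, and
the ratio `P(XY > t x) / P(XY > t) → x ^ (-α)` follows by dividing two such limits.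

As `X` need not be measurable, the conditioning identity is not obtained from Fubini. Instead, cut
`Ω` into the shells `q ^ k ≤ Y < q ^ (k + 1)`: on each shell, independence and the monotonicity of
`Ḡ` squeeze both `P(XY > t)` and `E[Ḡ(t / Y)]` between `∑ Ḡ(t / q ^ k) P(shell)` and
`∑ Ḡ(t / q ^ (k + 1)) P(shell)`, and the Pareto scaling `Ḡ(s / q) ≤ q ^ α Ḡ(s)` bounds the ratio of
these sums by `q ^ α`. Letting `q ↓ 1` gives equality.
-/

open MeasureTheory ProbabilityTheory Real Filter Set
open scoped ENNReal Topology Function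

lemma ENNReal.le_of_forall_le_ofReal_rpow_mul {a b : ℝ≥0∞} (α : ℝ)
    (h : ∀ q : ℝ, 1 < q → a ≤ ENNReal.ofReal (q ^ α) * b) : a ≤ b := by
  have hpow : Tendsto (fun q : ℝ => q ^ α) (𝓝[>] 1) (𝓝 1) := by
    simpa using ((Real.continuousAt_rpow_const 1 α (Or.inl one_ne_zero)).tendsto).mono_left
      nhdsWithin_le_nhds
  have hlim : Tendsto (fun q : ℝ => ENNReal.ofReal (q ^ α) * b) (𝓝[>] 1) (𝓝 b) := by
    simpa using ENNReal.Tendsto.mul_const (ENNReal.tendsto_ofReal hpow) (Or.inl (by simp))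
  exact ge_of_tendsto hlim (eventually_nhdsWithin_of_forall h)

lemma measure_eq_tsum_inter {Ω ι : Type*} [MeasurableSpace Ω] [Countable ι] {μ : Measure Ω}
    {B : ι → Set Ω} (hm : ∀ i, NullMeasurableSet (B i) μ) (hd : Pairwise (AEDisjoint μ on B))
    (hcov : ⋃ i, B i = univ) (S : Set Ω) : μ S = ∑' i, μ (S ∩ B i) := by
  conv_lhs => rw [← Measure.restrict_univ (μ := μ), ← hcov, Measure.restrict_iUnion_ae hd hm,
    Measure.sum_apply_of_countable]
  simp only [Measure.restrict_apply₀' (hm _)]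

lemma lintegral_le_mul_measure_of_le {Ω : Type*} [MeasurableSpace Ω] {μ : Measure Ω} {s : Set Ω}
    (hs : NullMeasurableSet s μ) {f : Ω → ℝ≥0∞} {c : ℝ≥0∞} (hf : ∀ ω ∈ s, f ω ≤ c) :
    ∫⁻ ω in s, f ω ∂μ ≤ c * μ s := by
  rw [← setLIntegral_const]
  exact lintegral_mono_ae ((ae_restrict_mem₀ hs).mono hf)

lemma mul_measure_le_lintegral_of_le {Ω : Type*} [MeasurableSpace Ω] {μ : Measure Ω} {s : Set Ω}
    (hs : NullMeasurableSet s μ) {f : Ω → ℝ≥0∞} {c : ℝ≥0∞} (hf : ∀ ω ∈ s, c ≤ f ω) :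
    c * μ s ≤ ∫⁻ ω in s, f ω ∂μ := by
  rw [← setLIntegral_const]
  exact lintegral_mono_ae ((ae_restrict_mem₀ hs).mono hf)

section GeomShell

variable {Ω : Type*} {X Z : Ω → ℝ} {q t : ℝ}

def geomShell (Z : Ω → ℝ) (q : ℝ) (k : ℤ) : Set Ω := Z ⁻¹' Ico (q ^ k) (q ^ (k + 1))

lemma pairwise_disjoint_geomShell (hq : 1 ≤ q) : Pairwise (Disjoint on geomShell Z q) := by
  have hIco : Pairwise (Disjoint on fun k : ℤ => Ico (q ^ k) (q ^ (k + 1))) := by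
    simpa [Order.succ_eq_add_one] using (zpow_right_mono₀ hq).pairwise_disjoint_on_Ico_succ
  exact fun k j hkj => (hIco hkj).preimage Z

lemma iUnion_geomShell (hZ : ∀ ω, 0 < Z ω) (hq : 1 < q) : ⋃ k, geomShell Z q k = univ :=
  eq_univ_of_forall fun ω => mem_iUnion.2 (exists_mem_Ico_zpow (hZ ω) hq)

lemma div_le_div_zpow_of_mem_geomShell {ω : Ω} (ht : 0 < t) (hq : 0 < q) {k : ℤ}
    (hω : ω ∈ geomShell Z q k) : t / Z ω ≤ t / q ^ k :=
  div_le_div_of_nonneg_left ht.le (zpow_pos hq k) hω.1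

lemma div_zpow_succ_le_div_of_mem_geomShell {ω : Ω} (ht : 0 < t) (hq : 0 < q) {k : ℤ}
    (hω : ω ∈ geomShell Z q k) : t / q ^ (k + 1) ≤ t / Z ω :=
  div_le_div_of_nonneg_left ht.le ((zpow_pos hq k).trans_le hω.1) hω.2.le

lemma inter_geomShell_subset_lt_mul (ht : 0 < t) (hq : 0 < q) (k : ℤ) :
    {ω | t / q ^ k < X ω} ∩ geomShell Z q k ⊆ {ω | t < X ω * Z ω} := by
  rintro ω ⟨hX, hZ, -⟩
  have hqk : 0 < q ^ k := zpow_pos hq k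
  have hX0 : 0 < X ω := (div_pos ht hqk).trans hX
  calc t < X ω * q ^ k := (div_lt_iff₀ hqk).1 hX
    _ ≤ X ω * Z ω := mul_le_mul_of_nonneg_left hZ hX0.le

lemma lt_mul_inter_geomShell_subset (ht : 0 < t) (hq : 0 < q) (k : ℤ) :
    {ω | t < X ω * Z ω} ∩ geomShell Z q k ⊆ {ω | t / q ^ (k + 1) < X ω} := by
  rintro ω ⟨hXZ, hZ, hZ'⟩
  have hZ0 : 0 < Z ω := (zpow_pos hq k).trans_le hZ
  have hX0 : 0 < X ω := pos_of_mul_pos_left (ht.trans hXZ) hZ0.le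
  change t / q ^ (k + 1) < X ω
  rw [div_lt_iff₀ (zpow_pos hq _)]
  calc t < X ω * Z ω := hXZ
    _ ≤ X ω * q ^ (k + 1) := mul_le_mul_of_nonneg_left hZ'.le hX0.le

variable [MeasurableSpace Ω] {μ : Measure Ω}

lemma nullMeasurableSet_geomShell (hZ : AEMeasurable Z μ) (k : ℤ) :
    NullMeasurableSet (geomShell Z q k) μ :=
  hZ.nullMeasurableSet_preimage measurableSet_Ico

lemma measure_eq_tsum_inter_geomShell (hZ : AEMeasurable Z μ) (hZpos : ∀ ω, 0 < Z ω)
    (hq : 1 < q) (S : Set Ω) : μ S = ∑' k, μ (S ∩ geomShell Z q k) :=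
  measure_eq_tsum_inter (nullMeasurableSet_geomShell hZ)
    (pairwise_disjoint_geomShell hq.le).aedisjoint (iUnion_geomShell hZpos hq) S

lemma lintegral_eq_tsum_setLIntegral_geomShell (hZ : AEMeasurable Z μ) (hZpos : ∀ ω, 0 < Z ω)
    (hq : 1 < q) (f : Ω → ℝ≥0∞) : ∫⁻ ω, f ω ∂μ = ∑' k, ∫⁻ ω in geomShell Z q k, f ω ∂μ := by
  rw [← lintegral_iUnion₀ (nullMeasurableSet_geomShell hZ)
    (pairwise_disjoint_geomShell hq.le).aedisjoint, iUnion_geomShell hZpos hq,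
    Measure.restrict_univ]

lemma ProbabilityTheory.IndepFun.measure_lt_inter_geomShell (hXZ : IndepFun X Z μ) (s : ℝ)
    (k : ℤ) :
    μ ({ω | s < X ω} ∩ geomShell Z q k) = μ {ω | s < X ω} * μ (geomShell Z q k) :=
  hXZ.measure_inter_preimage_eq_mul _ _ measurableSet_Ioi measurableSet_Ico

theorem measure_lt_mul_eq_lintegral (hZ : AEMeasurable Z μ) (hZpos : ∀ ω, 0 < Z ω)
    (hXZ : IndepFun X Z μ) (α : ℝ) (hpotter : ∀ q : ℝ, 1 ≤ q → ∀ s : ℝ, 0 < s →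
      μ {ω | s / q < X ω} ≤ ENNReal.ofReal (q ^ α) * μ {ω | s < X ω})
    (ht : 0 < t) :
    μ {ω | t < X ω * Z ω} = ∫⁻ ω, μ {x | t / Z ω < X x} ∂μ := by
  set G : ℝ → ℝ≥0∞ := fun s => μ {ω | s < X ω}
  have hG : Antitone G := fun s s' h => measure_mono fun ω hω => h.trans_lt hω
  suffices hsand : ∀ q : ℝ, 1 < q →
      ∃ L U : ℝ≥0∞, U ≤ ENNReal.ofReal (q ^ α) * L ∧
        (L ≤ μ {ω | t < X ω * Z ω} ∧ μ {ω | t < X ω * Z ω} ≤ U) ∧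
        (L ≤ ∫⁻ ω, G (t / Z ω) ∂μ ∧ ∫⁻ ω, G (t / Z ω) ∂μ ≤ U) by
    refine le_antisymm (ENNReal.le_of_forall_le_ofReal_rpow_mul α fun q hq => ?_)
      (ENNReal.le_of_forall_le_ofReal_rpow_mul α fun q hq => ?_) <;>
    obtain ⟨L, U, hUL, ⟨hLa, haU⟩, hLb, hbU⟩ := hsand q hq
    · exact haU.trans (hUL.trans (by gcongr))
    · exact hbU.trans (hUL.trans (by gcongr))
  intro q hq
  have hq0 : 0 < q := one_pos.trans hq
  refine ⟨∑' k, G (t / q ^ k) * μ (geomShell Z q k),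
    ∑' k, G (t / q ^ (k + 1)) * μ (geomShell Z q k), ?_, ⟨?_, ?_⟩, ?_, ?_⟩
  · rw [← ENNReal.tsum_mul_left]
    refine ENNReal.tsum_le_tsum fun k => ?_
    rw [← mul_assoc, zpow_add_one₀ hq0.ne', ← div_div]
    gcongr
    exact hpotter q hq.le _ (div_pos ht (zpow_pos hq0 k))
  · rw [measure_eq_tsum_inter_geomShell hZ hZpos hq]
    refine ENNReal.tsum_le_tsum fun k => ?_
    rw [← hXZ.measure_lt_inter_geomShell]
    exact measure_mono (subset_inter (inter_geomShell_subset_lt_mul ht hq0 k) inter_subset_right)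
  · rw [measure_eq_tsum_inter_geomShell hZ hZpos hq]
    refine ENNReal.tsum_le_tsum fun k => ?_
    rw [← hXZ.measure_lt_inter_geomShell]
    exact measure_mono (subset_inter (lt_mul_inter_geomShell_subset ht hq0 k) inter_subset_right)
  · rw [lintegral_eq_tsum_setLIntegral_geomShell hZ hZpos hq]
    exact ENNReal.tsum_le_tsum fun k => mul_measure_le_lintegral_of_le
      (nullMeasurableSet_geomShell hZ k) fun ω hω =>
        hG (div_le_div_zpow_of_mem_geomShell ht hq0 hω)
  · rw [lintegral_eq_tsum_setLIntegral_geomShell hZ hZpos hq]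
    exact ENNReal.tsum_le_tsum fun k => lintegral_le_mul_measure_of_le
      (nullMeasurableSet_geomShell hZ k) fun ω hω =>
        hG (div_zpow_succ_le_div_of_mem_geomShell ht hq0 hω)

end GeomShell

lemma tendsto_integral_min_atTop {Ω : Type*} [MeasurableSpace Ω] {μ : Measure Ω} {f : Ω → ℝ}
    (hf : Integrable f μ) (hf0 : ∀ ω, 0 ≤ f ω) :
    Tendsto (fun c : ℝ => ∫ ω, min c (f ω) ∂μ) atTop (𝓝 (∫ ω, f ω ∂μ)) := by
  refine tendsto_integral_filter_of_dominated_convergence f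
    (Eventually.of_forall fun c => aestronglyMeasurable_const.inf hf.aestronglyMeasurable) ?_ hf
    (Eventually.of_forall fun ω => tendsto_const_nhds.congr' ?_)
  · filter_upwards [eventually_ge_atTop 0] with c hc
    refine Eventually.of_forall fun ω => ?_
    rw [Real.norm_of_nonneg (le_min hc (hf0 ω))]
    exact min_le_right _ _
  · filter_upwards [eventually_ge_atTop (f ω)] with c hc
    exact (min_eq_right hc).symm

lemma tendsto_div_comp_mul_of_tendsto_rpow_mul {g : ℝ → ℝ} {α L : ℝ} (hL : L ≠ 0)
    (hg : Tendsto (fun t => t ^ α * g t) atTop (𝓝 L)) {x : ℝ} (hx : 0 < x) :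
    Tendsto (fun t => g (t * x) / g t) atTop (𝓝 (x ^ (-α))) := by
  have hgx := hg.comp (tendsto_id.atTop_mul_const hx)
  have hquot := (hgx.div hg hL).mul_const (x ^ (-α))
  rw [div_self hL, one_mul] at hquot
  refine hquot.congr' ?_
  filter_upwards [eventually_gt_atTop 0] with t ht
  have htα : t ^ α ≠ 0 := (rpow_pos_of_pos ht α).ne'
  have hxα : x ^ α * x ^ (-α) = 1 := by rw [← rpow_add hx, add_neg_cancel, rpow_zero]
  simp only [Pi.div_apply, Function.comp_apply, id, mul_rpow ht.le hx.le]
  calc t ^ α * x ^ α * g (t * x) / (t ^ α * g t) * x ^ (-α)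
      = g (t * x) / g t * (x ^ α * x ^ (-α)) := by field_simp
    _ = g (t * x) / g t := by rw [hxα, mul_one]

lemma min_one_div_rpow_neg_le {α q s : ℝ} (hα : 0 ≤ α) (hq : 1 ≤ q) (hs : 0 < s) :
    min 1 ((s / q) ^ (-α)) ≤ q ^ α * min 1 (s ^ (-α)) := by
  have hq0 : 0 < q := one_pos.trans_le hq
  have hscale : (s / q) ^ (-α) = q ^ α * s ^ (-α) := by
    rw [div_rpow hs.le hq0.le, rpow_neg hq0.le, div_inv_eq_mul, mul_comm]
  rw [hscale, mul_min_of_nonneg _ _ (rpow_nonneg hq0.le α), mul_one]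
  exact min_le_min (one_le_rpow hq hα) le_rfl

lemma rpow_mul_min_one_div_rpow_neg {α t y : ℝ} (ht : 0 < t) (hy : 0 < y) :
    t ^ α * min 1 ((t / y) ^ (-α)) = min (t ^ α) (y ^ α) := by
  have htα : t ^ α ≠ 0 := (rpow_pos_of_pos ht α).ne'
  rw [mul_min_of_nonneg _ _ (rpow_nonneg ht.le α), mul_one, rpow_neg (div_pos ht hy).le,
    div_rpow ht.le hy.le, inv_div, mul_div_cancel₀ _ htα]

section ParetoTail

variable {Ω : Type*} [MeasurableSpace Ω] {μ : Measure Ω} {X Y : Ω → ℝ} {α : ℝ}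

def HasParetoTail (μ : Measure Ω) (X : Ω → ℝ) (α : ℝ) : Prop :=
  ∀ s : ℝ, 0 < s → μ {ω | s < X ω} = ENNReal.ofReal (min 1 (s ^ (-α)))

lemma hasParetoTail_of_measure_lt [IsProbabilityMeasure μ] (hα : 0 ≤ α)
    (hX1 : μ {ω | 1 ≤ X ω} = 1) (hsurv : ∀ t : ℝ, 1 ≤ t → (μ {ω | t < X ω}).toReal = t ^ (-α)) :
    HasParetoTail μ X α := by
  intro s hs
  rcases lt_or_ge s 1 with hs1 | hs1
  · have hone : μ {ω | s < X ω} = 1 :=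
      le_antisymm prob_le_one (hX1 ▸ measure_mono fun ω hω => hs1.trans_le hω)
    rw [hone, min_eq_left (one_le_rpow_of_pos_of_le_one_of_nonpos hs hs1.le (neg_nonpos.2 hα)),
      ENNReal.ofReal_one]
  · rw [min_eq_right (rpow_le_one_of_one_le_of_nonpos hs1 (neg_nonpos.2 hα)), ← hsurv s hs1,
      ENNReal.ofReal_toReal (measure_ne_top _ _)]

lemma HasParetoTail.measure_div_lt_le (hX : HasParetoTail μ X α) (hα : 0 ≤ α) {q : ℝ}
    (hq : 1 ≤ q) {s : ℝ} (hs : 0 < s) :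
    μ {ω | s / q < X ω} ≤ ENNReal.ofReal (q ^ α) * μ {ω | s < X ω} := by
  rw [hX _ (div_pos hs (one_pos.trans_le hq)), hX s hs,
    ← ENNReal.ofReal_mul (rpow_nonneg (one_pos.trans_le hq).le α)]
  exact ENNReal.ofReal_le_ofReal (min_one_div_rpow_neg_le hα hq hs)

lemma HasParetoTail.rpow_mul_measure_lt_mul (hX : HasParetoTail μ X α) (hα : 0 ≤ α)
    (hY : AEMeasurable Y μ) (hYpos : ∀ ω, 0 < Y ω) (hXY : IndepFun X Y μ) {t : ℝ} (ht : 0 < t) :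
    t ^ α * (μ {ω | t < X ω * Y ω}).toReal = ∫ ω, min (t ^ α) (Y ω ^ α) ∂μ := by
  have htail : ∀ ω, μ {x | t / Y ω < X x} = ENNReal.ofReal (min 1 ((t / Y ω) ^ (-α))) :=
    fun ω => hX _ (div_pos ht (hYpos ω))
  rw [measure_lt_mul_eq_lintegral hY hYpos hXY α (fun q hq s hs => hX.measure_div_lt_le hα hq hs)
    ht, lintegral_congr fun ω => htail ω, ← integral_eq_lintegral_of_nonneg_ae
      (Eventually.of_forall fun ω => le_min zero_le_one (rpow_nonneg (div_pos ht (hYpos ω)).le _))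
      (aestronglyMeasurable_const.inf ((hY.const_div t).pow_const _).aestronglyMeasurable),
    ← integral_const_mul]
  exact integral_congr_ae (Eventually.of_forall fun ω =>
    rpow_mul_min_one_div_rpow_neg ht (hYpos ω))

end ParetoTail

/-- Breiman's lemma (exact Pareto case): if `X` is Pareto with `P(X > t) = t^{−α}`
for `t ≥ 1`, and `Y > 0` is independent of `X` with all positive moments finite, then
`P(XY > t)/P(X > t) → E[Y^α]`; in particular `XY` is regularly varying with index `−α`. -/
theorem breiman_pareto_product
    {Ω : Type*} [MeasurableSpace Ω] (P : Measure Ω) [IsProbabilityMeasure P]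
    (X Y : Ω → ℝ) (α : ℝ) (hα : 0 < α)
    (hX1 : P {ω | 1 ≤ X ω} = 1)
    (hsurv : ∀ t : ℝ, 1 ≤ t → (P {ω | X ω > t}).toReal = t ^ (-α))
    (hYpos : ∀ ω, 0 < Y ω)
    (hindep : IndepFun X Y P)
    (hmom : ∀ p : ℝ, 0 < p → Integrable (fun ω => Y ω ^ p) P) :
    Tendsto (fun t : ℝ =>
        (P {ω | X ω * Y ω > t}).toReal / (P {ω | X ω > t}).toReal)
      atTop (nhds (∫ ω, Y ω ^ α ∂P)) ∧
    ∀ x : ℝ, 0 < x →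
      Tendsto (fun t : ℝ =>
          (P {ω | X ω * Y ω > t * x}).toReal / (P {ω | X ω * Y ω > t}).toReal)
        atTop (nhds (x ^ (-α))) := by
  simp only [gt_iff_lt] at hsurv ⊢
  have hY : AEMeasurable Y P := by simpa using (hmom 1 one_pos).aemeasurable
  have hX : HasParetoTail P X α := hasParetoTail_of_measure_lt hα.le hX1 hsurv
  have hYα : Integrable (fun ω => Y ω ^ α) P := hmom α hα
  have hlim : Tendsto (fun t => t ^ α * (P {ω | t < X ω * Y ω}).toReal) atTop
      (𝓝 (∫ ω, Y ω ^ α ∂P)) := by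
    refine ((tendsto_integral_min_atTop hYα fun ω => (rpow_pos_of_pos (hYpos ω) α).le).comp
      (tendsto_rpow_atTop hα)).congr' ?_
    filter_upwards [eventually_gt_atTop 0] with t ht
    exact (hX.rpow_mul_measure_lt_mul hα.le hY hYpos hindep ht).symm
  have hmoment_pos : 0 < ∫ ω, Y ω ^ α ∂P := by
    have hsupp : Function.support (fun ω => Y ω ^ α) = univ :=
      eq_univ_of_forall fun ω => (rpow_pos_of_pos (hYpos ω) α).ne'
    rw [integral_pos_iff_support_of_nonneg (fun ω => (rpow_pos_of_pos (hYpos ω) α).le) hYα, hsupp]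
    simp
  refine ⟨hlim.congr' ?_, fun x hx => tendsto_div_comp_mul_of_tendsto_rpow_mul
    hmoment_pos.ne' hlim hx⟩
  filter_upwards [eventually_ge_atTop 1] with t ht
  rw [hsurv t ht, rpow_neg (one_pos.trans_le ht).le, div_inv_eq_mul, mul_comm]
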